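/- A subset S of the positive roots of a finite crystallographic root system R is biconvex (both convex and coconvex) if and only if S equals the inversion set I(w) = {α ∈ R⁺ : w⁻¹α ∈ R⁻} for some element w of the Weyl group W(R). -/

import Mathlib

open scoped RealInnerProductSpace

variable {V : Type*} [NormedAddCommGroup V] [InnerProductSpace ℝ V]

/-- A finite crystallographic root system with a choice of positive and simple roots. -/
structure RootSystemData (V : Type*) [NormedAddCommGroup V] [InnerProductSpace ℝ V] where
  roots : Set V
  pos : Set V
  simple : Set V
  finite : roots.Finite
  zero_not_mem : (0 : V) ∉ roots
  neg_mem : ∀ α ∈ roots, -α ∈ roots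
  crystallographic : ∀ α ∈ roots, ∀ β ∈ roots, ∃ n : ℤ, 2 * ⟪α, β⟫ = (n : ℝ) * ⟪α, α⟫
  reflect_mem : ∀ α ∈ roots, ∀ β ∈ roots, β - (2 * ⟪α, β⟫ / ⟪α, α⟫) • α ∈ roots
  pos_subset : pos ⊆ roots
  pos_total : ∀ α ∈ roots, α ∈ pos ∨ -α ∈ pos
  pos_not_both : ∀ α ∈ pos, -α ∉ pos
  pos_add : ∀ α ∈ pos, ∀ β ∈ pos, α + β ∈ roots → α + β ∈ pos
  simple_subset : simple ⊆ pos
  simple_indep : LinearIndependent ℝ (fun s : simple => (s : V))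
  pos_nat_comb : ∀ α ∈ pos, ∃ c : V →₀ ℕ, ↑c.support ⊆ simple ∧
    α = c.sum fun v n => (n : ℝ) • v

/-- `S` is closed under sums that lie in `P` ("convex"). -/
def IsSumClosed (P S : Set V) : Prop :=
  ∀ ⦃a b : V⦄, a ∈ S → b ∈ S → a + b ∈ P → a + b ∈ S

/-- `S ⊆ P` is coconvex if its complement in `P` is convex. -/
def IsCoconvex (P S : Set V) : Prop :=
  S ⊆ P ∧ IsSumClosed P (P \ S)

/-- `S ⊆ P` is biconvex if both it and its complement in `P` are convex. -/
def IsBiconvex (P S : Set V) : Prop :=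
  S ⊆ P ∧ IsSumClosed P S ∧ IsSumClosed P (P \ S)

/-- `γ` and `δ` lie in the same `α`-string of `P`: they differ by an integer multiple
of `α` and all intermediate points lie in `P`. -/
def SameString (P : Set V) (α γ δ : V) : Prop :=
  γ ∈ P ∧ δ ∈ P ∧ ∃ k : ℤ, δ = γ + k • α ∧
    ∀ j : ℤ, min 0 k ≤ j → j ≤ max 0 k → γ + j • α ∈ P

/-- The Peterson translate `τ(S, α)` of `S ⊆ P` along `α`: on each `α`-string of `P`,
the `r` elements of `S` are replaced by the bottom `r` elements of the string. -/
def PetersonTranslate (P S : Set V) (α : V) : Set V :=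
  {x | ∃ δ : V, δ ∈ P ∧ δ - α ∉ P ∧ ∃ k : ℕ, x = δ + (k : ℤ) • α ∧
        k < (S ∩ {γ | SameString P α δ γ}).ncard}

/-- Dominance order: `α ⪯ β` iff `β - α` is a non-negative combination of simple roots `Δ`. -/
def Dominates (Delta : Set V) (α β : V) : Prop :=
  ∃ c : V →₀ ℝ, ↑c.support ⊆ Delta ∧ (∀ v, 0 ≤ c v) ∧ β - α = c.sum fun v r => r • v

/-- A lower order ideal of the positive roots in dominance order. -/
def IsLowerOrderIdeal (pos Delta S : Set V) : Prop :=
  S ⊆ pos ∧ ∀ β ∈ S, ∀ α ∈ pos, Dominates Delta α β → α ∈ S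

/-- The reflection through the hyperplane orthogonal to `α` (the identity if `α = 0`). -/
noncomputable def reflLin (α : V) : V ≃ₗ[ℝ] V := by
  classical
  exact if h : α = (0 : V) then LinearEquiv.refl ℝ V
  else
    Module.reflection (f := (2 / ⟪α, α⟫) • ((innerSL ℝ α : V →L[ℝ] ℝ) : V →ₗ[ℝ] ℝ)) (x := α)
      (by
        have h0 : ⟪α, α⟫ ≠ 0 := inner_self_ne_zero.mpr h
        simp only [LinearMap.smul_apply, ContinuousLinearMap.coe_coe, innerSL_apply_apply,
          smul_eq_mul]
        field_simp)

/-- The Weyl group of a set of roots, as a group of linear automorphisms. -/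
noncomputable def WeylGroup (R : Set V) : Subgroup (V ≃ₗ[ℝ] V) :=
  Subgroup.closure ((fun α => reflLin α) '' R)

/-- The inversion set `I(w) = {α ∈ R⁺ : w⁻¹ α ∈ R⁻}`. -/
def inversionSet (pos : Set V) (w : V ≃ₗ[ℝ] V) : Set V :=
  {α ∈ pos | -(w.symm α) ∈ pos}

/-!
For `S ⊆ R⁺` let `flipPos S = (R⁺ \ S) ∪ -S`. Then `S` is biconvex iff `flipPos S` is closed
under sums that are roots, i.e. iff it is a positive system, and `flipPos I(w) = w R⁺`. So the
theorem amounts to: every positive system `P` is a Weyl group translate of `R⁺`. If `P ≠ R⁺`, a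
root of minimal height among the positive roots `α` with `-α ∈ P` is simple, say `s`. The
reflection `s_s` permutes `R⁺ \ {s, 2s}`, so `s_s P` is a positive system containing fewer
negative roots, and induction applies.
-/

open Pointwise

lemma reflLin_of_ne_zero {α : V} (hα : α ≠ 0) :
    reflLin α = Module.reflection (f := (2 / ⟪α, α⟫) • ((innerSL ℝ α : V →L[ℝ] ℝ) : V →ₗ[ℝ] ℝ))
      (x := α) (by
        simp only [LinearMap.smul_apply, ContinuousLinearMap.coe_coe, innerSL_apply_apply,
          smul_eq_mul]
        field_simp [inner_self_ne_zero.mpr hα]) := by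
  rw [reflLin, dif_neg hα]

lemma reflLin_apply {α : V} (hα : α ≠ 0) (β : V) :
    reflLin α β = β - (2 * ⟪α, β⟫ / ⟪α, α⟫) • α := by
  rw [reflLin_of_ne_zero hα, Module.reflection_apply]
  congr 2
  simp only [LinearMap.smul_apply, ContinuousLinearMap.coe_coe, innerSL_apply_apply, smul_eq_mul]
  ring

lemma reflLin_inv (α : V) : (reflLin α)⁻¹ = reflLin α := by
  by_cases hα : α = 0
  · rw [reflLin, dif_pos hα]; rfl
  · rw [reflLin_of_ne_zero hα, Module.reflection_inv]

lemma reflLin_involutive (α : V) : Function.Involutive (reflLin α) := fun x =>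
  (DFunLike.congr_fun (reflLin_inv α) _).symm.trans ((reflLin α).symm_apply_apply x)

lemma reflLin_self {α : V} (hα : α ≠ 0) : reflLin α α = -α := by
  rw [reflLin_of_ne_zero hα, Module.reflection_apply_self]

lemma le_of_two_mul_eq_int_mul {a b : ℝ} {m : ℤ} (ha : 0 < a) (hb : 0 < b)
    (h : 2 * b = m * a) (hm : m ≠ 1) : a ≤ b := by
  have hm0 : (0 : ℝ) < m := by nlinarith
  have hm2 : (2 : ℝ) ≤ m := by
    have : (0 : ℤ) < m := by exact_mod_cast hm0
    exact_mod_cast (by omega : (2 : ℤ) ≤ m)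
  nlinarith

namespace RootSystemData

variable (RS : RootSystemData V)

lemma ne_zero_of_mem_roots {α : V} (hα : α ∈ RS.roots) : α ≠ 0 :=
  fun h => RS.zero_not_mem (h ▸ hα)

lemma inner_self_pos_of_mem_roots {α : V} (hα : α ∈ RS.roots) : 0 < ⟪α, α⟫ :=
  real_inner_self_pos.mpr (RS.ne_zero_of_mem_roots hα)

lemma weylGroup_le_stabilizer : WeylGroup RS.roots ≤ MulAction.stabilizer _ RS.roots := by
  refine Subgroup.closure_le _ |>.mpr ?_
  rintro _ ⟨α, hα, rfl⟩
  have hα0 := RS.ne_zero_of_mem_roots hα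
  have hmaps : Set.MapsTo (reflLin α) RS.roots RS.roots := fun β hβ => by
    rw [reflLin_apply hα0]
    exact RS.reflect_mem α hα β hβ
  simp only [SetLike.mem_coe]
  rw [reflLin_of_ne_zero hα0] at hmaps ⊢
  exact MulAction.mem_stabilizer_iff.mpr (Module.bijOn_reflection_of_mapsTo _ hmaps).image_eq

lemma reflLin_mem_weylGroup {α : V} (hα : α ∈ RS.roots) : reflLin α ∈ WeylGroup RS.roots :=
  Subgroup.subset_closure ⟨α, hα, rfl⟩

lemma apply_mem_roots_iff {w : V ≃ₗ[ℝ] V} (hw : w ∈ WeylGroup RS.roots) {x : V} :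
    w x ∈ RS.roots ↔ x ∈ RS.roots := by
  have := Set.smul_mem_smul_set_iff (a := w) (x := x) (s := RS.roots)
  rwa [MulAction.mem_stabilizer_iff.mp (RS.weylGroup_le_stabilizer hw)] at this

lemma mem_pos_of_neg_not_mem {α : V} (hα : α ∈ RS.roots) (h : -α ∉ RS.pos) : α ∈ RS.pos :=
  (RS.pos_total α hα).resolve_right h

lemma neg_mem_roots_iff {α : V} : -α ∈ RS.roots ↔ α ∈ RS.roots :=
  ⟨fun h => neg_neg α ▸ RS.neg_mem _ h, RS.neg_mem α⟩

/-- The sum of the coordinates in a basis extending the simple roots: on the span of the simple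
roots this is the usual height. -/
noncomputable def height : V →ₗ[ℝ] ℝ :=
  (Module.Basis.extend RS.simple_indep).sumCoords

lemma height_simple {v : V} (hv : v ∈ RS.simple) : RS.height v = 1 := by
  have hmem := LinearIndepOn.subset_extend (v := id) RS.simple_indep (Set.subset_univ _) hv
  have h := (Module.Basis.extend RS.simple_indep).sumCoords_self_apply (i := ⟨v, hmem⟩)
  rwa [Module.Basis.extend_apply_self RS.simple_indep ⟨v, hmem⟩] at h

lemma one_le_height {α : V} (hα : α ∈ RS.pos) : 1 ≤ RS.height α := by
  obtain ⟨c, hc, rfl⟩ := RS.pos_nat_comb α hα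
  have hc0 : c ≠ 0 := by
    rintro rfl
    exact RS.zero_not_mem (RS.pos_subset (by simpa using hα))
  obtain ⟨v, hv⟩ := Finsupp.ne_iff.mp hc0
  have hheight : RS.height (c.sum fun v n => (n : ℝ) • v) = c.sum fun _ n => (n : ℝ) := by
    rw [map_finsuppSum]
    refine Finsupp.sum_congr fun u hu => ?_
    rw [map_smul, RS.height_simple (hc hu), smul_eq_mul, mul_one]
  calc (1 : ℝ) ≤ c v := by exact_mod_cast Nat.one_le_iff_ne_zero.mpr hv
    _ ≤ c.sum fun _ n => (n : ℝ) :=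
      Finset.single_le_sum (f := fun u => (c u : ℝ)) (fun _ _ => by positivity)
        (Finsupp.mem_support_iff.mpr hv)
    _ = _ := hheight.symm

lemma exists_eq_smul_of_add_eq_smul {s α β : V} (hs : s ∈ RS.simple) (hα : α ∈ RS.pos)
    (hβ : β ∈ RS.pos) {r : ℝ} (h : α + β = r • s) : ∃ c : ℝ, α = c • s := by
  classical
  obtain ⟨c, hc, rfl⟩ := RS.pos_nat_comb α hα
  obtain ⟨d, hd, rfl⟩ := RS.pos_nat_comb β hβ
  let toReal : (V →₀ ℕ) → V →₀ ℝ := fun c => c.mapRange Nat.cast Nat.cast_zero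
  have hlin : ∀ c : V →₀ ℕ, Finsupp.linearCombination ℝ id (toReal c) =
      c.sum fun v n => (n : ℝ) • v := fun c =>
    Finsupp.sum_mapRange_index fun _ => zero_smul ℝ _
  -- by linear independence, the coefficients of `α + β` are those of `r • s`
  set l := toReal c + toReal d - Finsupp.single s r
  have hl : l = 0 := by
    refine (linearIndepOn_iff (v := id)).mp RS.simple_indep l ?_ ?_
    · refine (Finsupp.mem_supported ℝ l).mpr fun v hv => ?_
      rcases Finset.mem_union.mp (Finsupp.support_sub hv) with hv | hv
      · rcases Finset.mem_union.mp (Finsupp.support_add hv) with hv | hv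
        · exact hc (Finsupp.support_mapRange hv)
        · exact hd (Finsupp.support_mapRange hv)
      · exact (Finset.mem_singleton.mp (Finsupp.support_single_subset hv)) ▸ hs
    · simp only [l, map_sub, map_add, hlin, Finsupp.linearCombination_single, id, h, sub_self]
  have hcoeff : ∀ v ≠ s, c v = 0 := fun v hv => by
    have hlv := DFunLike.congr_fun hl v
    simp only [l, toReal, Finsupp.sub_apply, Finsupp.add_apply, Finsupp.single_eq_of_ne hv,
      Finsupp.mapRange_apply, sub_zero, Finsupp.coe_zero, Pi.zero_apply] at hlv
    exact_mod_cast (add_eq_zero_iff_of_nonneg (Nat.cast_nonneg _) (Nat.cast_nonneg _)).mp hlv |>.1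
  refine ⟨c s, Finsupp.sum_eq_single s (fun v _ hv => ?_) (fun _ => by simp)⟩
  rw [hcoeff v hv, Nat.cast_zero, zero_smul]

lemma eq_one_or_two_of_smul_mem_pos {s : V} (hs : s ∈ RS.simple) {c : ℝ}
    (hc : c • s ∈ RS.pos) : c = 1 ∨ c = 2 := by
  have hsr : s ∈ RS.roots := RS.pos_subset (RS.simple_subset hs)
  have hss := RS.inner_self_pos_of_mem_roots hsr
  have hc1 : 1 ≤ c := by
    simpa [RS.height_simple hs] using RS.one_le_height hc
  obtain ⟨k, hk⟩ := RS.crystallographic (c • s) (RS.pos_subset hc) s hsr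
  simp only [real_inner_smul_left, real_inner_smul_right] at hk
  have hkc : (k : ℝ) * c = 2 := by
    have : c * ⟪s, s⟫ ≠ 0 := by positivity
    exact mul_right_cancel₀ this (by linear_combination -hk)
  have hk1 : 1 ≤ k := by
    have : (0 : ℝ) < k := by nlinarith
    exact_mod_cast this
  have hk2 : k ≤ 2 := by
    have : (k : ℝ) ≤ 2 := by nlinarith
    exact_mod_cast this
  interval_cases k
  · right; norm_num at hkc; linarith
  · left; norm_num at hkc; linarith

lemma inversionSet_reflLin_subset {s : V} (hs : s ∈ RS.simple) :
    inversionSet RS.pos (reflLin s) ⊆ {s, (2 : ℝ) • s} := by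
  rintro x ⟨hx, hσx⟩
  rw [← LinearEquiv.coe_inv, reflLin_inv,
    reflLin_apply (RS.ne_zero_of_mem_roots (RS.pos_subset (RS.simple_subset hs))), neg_sub] at hσx
  obtain ⟨c, rfl⟩ := RS.exists_eq_smul_of_add_eq_smul hs hx hσx (add_sub_cancel _ _)
  rcases RS.eq_one_or_two_of_smul_mem_pos hs hx with rfl | rfl
  · exact .inl (one_smul ℝ s)
  · exact .inr rfl

lemma sub_mem_roots_of_inner_pos {α β : V} (hα : α ∈ RS.roots) (hβ : β ∈ RS.roots)
    (hne : α ≠ β) (hip : 0 < ⟪α, β⟫) : α - β ∈ RS.roots := by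
  have hαα := RS.inner_self_pos_of_mem_roots hα
  have hββ := RS.inner_self_pos_of_mem_roots hβ
  obtain ⟨m, hm⟩ := RS.crystallographic α hα β hβ
  obtain ⟨n, hn⟩ := RS.crystallographic β hβ α hα
  rw [real_inner_comm] at hn
  by_cases hm1 : m = 1
  · have hσβ := RS.reflect_mem α hα β hβ
    rw [hm, hm1, Int.cast_one, one_mul, div_self hαα.ne', one_smul] at hσβ
    simpa using RS.neg_mem _ hσβ
  by_cases hn1 : n = 1
  · have hσα := RS.reflect_mem β hβ α hα
    rwa [real_inner_comm, hn, hn1, Int.cast_one, one_mul, div_self hββ.ne', one_smul] at hσα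
  -- otherwise `⟪α, α⟫, ⟪β, β⟫ ≤ ⟪α, β⟫`, so `‖α - β‖² ≤ 0`
  have h1 := le_of_two_mul_eq_int_mul hαα hip hm hm1
  have h2 := le_of_two_mul_eq_int_mul hββ hip hn hn1
  refine absurd (sub_eq_zero.mp (real_inner_self_nonpos.mp ?_)) hne
  rw [real_inner_sub_sub_self]
  linarith

lemma exists_simple_inner_pos {α : V} (hα : α ∈ RS.pos) : ∃ v ∈ RS.simple, 0 < ⟪v, α⟫ := by
  obtain ⟨c, hc, hcα⟩ := RS.pos_nat_comb α hα
  by_contra! h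
  have : ⟪α, α⟫ ≤ 0 := by
    nth_rewrite 1 [hcα]
    rw [Finsupp.sum, sum_inner]
    exact Finset.sum_nonpos fun v hv => by
      rw [real_inner_smul_left]
      exact mul_nonpos_of_nonneg_of_nonpos (Nat.cast_nonneg _) (h v (hc hv))
  exact (RS.inner_self_pos_of_mem_roots (RS.pos_subset hα)).not_ge this

lemma sub_mem_pos_of_inner_pos {α v : V} (hα : α ∈ RS.pos) (hv : v ∈ RS.simple) (hne : α ≠ v)
    (hip : 0 < ⟪v, α⟫) : α - v ∈ RS.pos := by
  have hvp := RS.simple_subset hv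
  have hsub := RS.sub_mem_roots_of_inner_pos (RS.pos_subset hα) (RS.pos_subset hvp) hne
    (by rwa [real_inner_comm])
  refine RS.mem_pos_of_neg_not_mem hsub fun hneg => ?_
  have h1 := RS.one_le_height hneg
  have h2 := RS.one_le_height hα
  rw [map_neg, map_sub, RS.height_simple hv] at h1
  linarith

structure IsPositiveSystem (P : Set V) : Prop where
  subset_roots : P ⊆ RS.roots
  isSumClosed : IsSumClosed RS.roots P
  mem_or_neg_mem : ∀ x ∈ RS.roots, x ∈ P ∨ -x ∈ P
  neg_not_mem : ∀ x ∈ P, -x ∉ P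

lemma isPositiveSystem_pos : RS.IsPositiveSystem RS.pos :=
  ⟨RS.pos_subset, fun a b ha hb => RS.pos_add a ha b hb, RS.pos_total, RS.pos_not_both⟩

namespace IsPositiveSystem

variable {RS} {P : Set V} (hP : RS.IsPositiveSystem P)
include hP

lemma image {w : V ≃ₗ[ℝ] V} (hw : w ∈ WeylGroup RS.roots) : RS.IsPositiveSystem (w '' P) := by
  have hroots : ∀ {x}, w.symm x ∈ RS.roots ↔ x ∈ RS.roots := RS.apply_mem_roots_iff (inv_mem hw)
  simp only [LinearEquiv.image_eq_preimage_symm]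
  refine ⟨fun x hx => hroots.mp (hP.subset_roots hx), fun a b ha hb hab => ?_,
    fun x hx => ?_, fun x hx hnx => ?_⟩
  · rw [Set.mem_preimage, map_add]
    exact hP.isSumClosed ha hb (map_add w.symm a b ▸ hroots.mpr hab)
  · simpa only [Set.mem_preimage, map_neg] using hP.mem_or_neg_mem _ (hroots.mpr hx)
  · exact hP.neg_not_mem _ hx (by simpa only [Set.mem_preimage, map_neg] using hnx)

lemma eq_pos_of_subset (h : P ⊆ RS.pos) : P = RS.pos :=
  h.antisymm fun x hx =>
    (hP.mem_or_neg_mem x (RS.pos_subset hx)).resolve_right fun hn => RS.pos_not_both x hx (h hn)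

lemma exists_simple_neg_mem (h : ¬ P ⊆ RS.pos) : ∃ s ∈ RS.simple, -s ∈ P := by
  set N := {x ∈ RS.pos | -x ∈ P}
  have hNfin : N.Finite := RS.finite.subset fun x hx => RS.pos_subset hx.1
  have hNne : N.Nonempty := by
    obtain ⟨y, hyP, hy⟩ := Set.not_subset.mp h
    exact ⟨-y, (RS.pos_total y (hP.subset_roots hyP)).resolve_left hy, (neg_neg y).symm ▸ hyP⟩
  -- a root of minimal height in `N` must be simple
  obtain ⟨α, ⟨hα, hαP⟩, hmin⟩ := Set.exists_min_image N RS.height hNfin hNne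
  by_contra! hsimple
  obtain ⟨v, hv, hip⟩ := RS.exists_simple_inner_pos hα
  have hne : α ≠ v := by rintro rfl; exact hsimple α hv hαP
  have hsub := RS.sub_mem_pos_of_inner_pos hα hv hne hip
  have hvP : v ∈ P :=
    (hP.mem_or_neg_mem v (RS.pos_subset (RS.simple_subset hv))).resolve_right (hsimple v hv)
  have hsubP : -(α - v) ∈ P := by
    have hsum : -(α - v) = -α + v := by abel
    rw [hsum]
    exact hP.isSumClosed hαP hvP (hsum ▸ RS.neg_mem _ (RS.pos_subset hsub))
  have := hmin (α - v) ⟨hsub, hsubP⟩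
  rw [map_sub, RS.height_simple hv] at this
  linarith

lemma ncard_image_reflLin_diff_pos_lt {s : V} (hs : s ∈ RS.simple) (hsP : -s ∈ P) :
    (reflLin s '' P \ RS.pos).ncard < (P \ RS.pos).ncard := by
  have hsr := RS.pos_subset (RS.simple_subset hs)
  have hsub : reflLin s '' P \ RS.pos ⊆ reflLin s '' ((P \ RS.pos) \ {-s}) := by
    rintro _ ⟨⟨x, hxP, rfl⟩, hσx⟩
    refine ⟨x, ⟨⟨hxP, fun hx => ?_⟩, ?_⟩, rfl⟩
    · have hxinv : x ∈ inversionSet RS.pos (reflLin s) := by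
        refine ⟨hx, ?_⟩
        rw [← LinearEquiv.coe_inv, reflLin_inv]
        refine (RS.pos_total _ ?_).resolve_left hσx
        exact (RS.apply_mem_roots_iff (RS.reflLin_mem_weylGroup hsr)).mpr (hP.subset_roots hxP)
      rcases RS.inversionSet_reflLin_subset hs hxinv with rfl | rfl
      · exact hP.neg_not_mem _ hxP hsP
      · -- `-(2 • s) = -s + -s` lies in `P` as well
        refine hP.neg_not_mem _ hxP ?_
        rw [two_smul, neg_add]
        refine hP.isSumClosed hsP hsP ?_
        rw [← neg_add, ← two_smul ℝ]
        exact RS.neg_mem _ (RS.pos_subset hx)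
    · rintro rfl
      refine hσx ?_
      rw [map_neg, reflLin_self (RS.ne_zero_of_mem_roots hsr), neg_neg]
      exact RS.simple_subset hs
  have hfin : (P \ RS.pos).Finite := RS.finite.subset fun x hx => hP.subset_roots hx.1
  calc (reflLin s '' P \ RS.pos).ncard
      ≤ (reflLin s '' ((P \ RS.pos) \ {-s})).ncard :=
        Set.ncard_le_ncard hsub (hfin.sdiff.image _)
    _ = ((P \ RS.pos) \ {-s}).ncard := Set.ncard_image_of_injective _ (reflLin s).injective
    _ < (P \ RS.pos).ncard :=
        Set.ncard_sdiff_singleton_lt_of_mem ⟨hsP, RS.pos_not_both s (RS.simple_subset hs)⟩ hfin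

theorem exists_eq_image_pos : ∃ w ∈ WeylGroup RS.roots, P = w '' RS.pos := by
  induction hn : (P \ RS.pos).ncard using Nat.strong_induction_on generalizing P with
  | _ n ih =>
  by_cases h : P ⊆ RS.pos
  · exact ⟨1, one_mem _, by rw [hP.eq_pos_of_subset h, LinearEquiv.coe_one, Set.image_id]⟩
  obtain ⟨s, hs, hsP⟩ := hP.exists_simple_neg_mem h
  have hσ := RS.reflLin_mem_weylGroup (RS.pos_subset (RS.simple_subset hs))
  obtain ⟨w, hw, hPw⟩ := ih _ (hn ▸ hP.ncard_image_reflLin_diff_pos_lt hs hsP) (hP.image hσ) rfl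
  refine ⟨reflLin s * w, mul_mem hσ hw, ?_⟩
  rw [show ⇑(reflLin s * w) = reflLin s ∘ w from rfl, Set.image_comp, ← hPw, ← Set.image_comp,
    (reflLin_involutive s).comp_self, Set.image_id]

end IsPositiveSystem

def flipPos (S : Set V) : Set V := (RS.pos \ S) ∪ -S

variable {RS} {S : Set V}

lemma neg_mem_flipPos_iff {x : V} (hx : x ∈ RS.pos) : -x ∈ RS.flipPos S ↔ x ∈ S := by
  simp only [flipPos, Set.mem_union, Set.mem_sdiff, Set.mem_neg, neg_neg,
    or_iff_right fun h : -x ∈ RS.pos ∧ _ => RS.pos_not_both x hx h.1]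

lemma mem_iff_neg_mem_flipPos (hS : S ⊆ RS.pos) {x : V} :
    x ∈ S ↔ x ∈ RS.pos ∧ -x ∈ RS.flipPos S :=
  ⟨fun hx => ⟨hS hx, (neg_mem_flipPos_iff (hS hx)).mpr hx⟩,
    fun ⟨hx, h⟩ => (neg_mem_flipPos_iff hx).mp h⟩

lemma eq_of_flipPos_eq {T : Set V} (hS : S ⊆ RS.pos) (hT : T ⊆ RS.pos)
    (h : RS.flipPos S = RS.flipPos T) : S = T :=
  Set.ext fun _ => by rw [mem_iff_neg_mem_flipPos hS, mem_iff_neg_mem_flipPos hT, h]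

lemma flipPos_inversionSet {w : V ≃ₗ[ℝ] V} (hw : w ∈ WeylGroup RS.roots) :
    RS.flipPos (inversionSet RS.pos w) = w '' RS.pos := by
  have hroots : ∀ {x}, w.symm x ∈ RS.roots ↔ x ∈ RS.roots := RS.apply_mem_roots_iff (inv_mem hw)
  ext x
  simp only [flipPos, inversionSet, LinearEquiv.image_eq_preimage_symm, Set.mem_union,
    Set.mem_sdiff, Set.mem_neg, Set.mem_preimage, Set.mem_ofPred_eq, map_neg, neg_neg, not_and]
  constructor
  · rintro (⟨hx, hnx⟩ | ⟨-, hx⟩)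
    · exact RS.mem_pos_of_neg_not_mem (hroots.mpr (RS.pos_subset hx)) (hnx hx)
    · exact hx
  · intro hx
    rcases RS.pos_total x (hroots.mp (RS.pos_subset hx)) with hxp | hxn
    · exact .inl ⟨hxp, fun _ => RS.pos_not_both _ hx⟩
    · exact .inr ⟨hxn, hx⟩

lemma isPositiveSystem_flipPos (hS : S ⊆ RS.pos) (h : IsSumClosed RS.roots (RS.flipPos S)) :
    RS.IsPositiveSystem (RS.flipPos S) := by
  refine ⟨?_, h, fun x hx => ?_, ?_⟩
  · rintro x (⟨hx, -⟩ | hx)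
    · exact RS.pos_subset hx
    · exact RS.neg_mem_roots_iff.mp (RS.pos_subset (hS hx))
  · rcases RS.pos_total x hx with hxp | hxn
    · by_cases hxS : x ∈ S
      · exact .inr ((neg_mem_flipPos_iff hxp).mpr hxS)
      · exact .inl (.inl ⟨hxp, hxS⟩)
    · by_cases hxS : -x ∈ S
      · exact .inl (neg_neg x ▸ (neg_mem_flipPos_iff hxn).mpr hxS)
      · exact .inr (.inl ⟨hxn, hxS⟩)
  · rintro x (⟨hxp, hxS⟩ | hxS) hnx
    · exact hxS ((neg_mem_flipPos_iff hxp).mp hnx)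
    · rcases hnx with ⟨-, hn⟩ | hn
      · exact hn hxS
      · exact RS.pos_not_both x (hS (by simpa using hn)) (hS hxS)

lemma add_mem_flipPos_of_neg_mem {a b : V} (hS : IsBiconvex RS.pos S) (ha : a ∈ RS.pos \ S)
    (hb : -b ∈ S) (hab : a + b ∈ RS.roots) : a + b ∈ RS.flipPos S := by
  rcases RS.pos_total _ hab with habp | habn
  · refine .inl ⟨habp, fun habS => ha.2 ?_⟩
    simpa using hS.2.1 habS hb (by simpa using ha.1)
  · refine .inr (Set.mem_neg.mpr (by_contra fun habS => ?_))
    have := hS.2.2 ha ⟨habn, habS⟩ (by simpa using hS.1 hb)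
    exact this.2 (by simpa using hb)

lemma isBiconvex_iff_isSumClosed_flipPos :
    IsBiconvex RS.pos S ↔ S ⊆ RS.pos ∧ IsSumClosed RS.roots (RS.flipPos S) := by
  refine ⟨fun hS => ⟨hS.1, ?_⟩, fun ⟨hS, h⟩ => ⟨hS, ?_, ?_⟩⟩
  · rintro a b (ha | ha) (hb | hb) hab
    · exact .inl (hS.2.2 ha hb (RS.pos_add a ha.1 b hb.1 hab))
    · exact add_mem_flipPos_of_neg_mem hS ha hb hab
    · exact add_comm a b ▸ add_mem_flipPos_of_neg_mem hS hb ha (add_comm a b ▸ hab)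
    · refine .inr (Set.mem_neg.mpr (neg_add a b ▸ hS.2.1 ha hb ?_))
      exact RS.pos_add _ (hS.1 ha) _ (hS.1 hb) (neg_add a b ▸ RS.neg_mem _ hab)
  · intro a b ha hb hab
    rw [← neg_mem_flipPos_iff hab, neg_add]
    exact h ((neg_mem_flipPos_iff (hS ha)).mpr ha) ((neg_mem_flipPos_iff (hS hb)).mpr hb)
      (neg_add a b ▸ RS.neg_mem _ (RS.pos_subset hab))
  · intro a b ha hb hab
    rcases h (.inl ha) (.inl hb) (RS.pos_subset hab) with habS | habS
    · exact habS
    · exact absurd (hS habS) (RS.pos_not_both _ hab)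

end RootSystemData

/-- A subset of the positive roots is biconvex if and only if it is the
inversion set of some Weyl group element. -/
theorem isBiconvex_iff_inversionSet
    (RS : RootSystemData V) (S : Set V) :
    IsBiconvex RS.pos S ↔ ∃ w ∈ WeylGroup RS.roots, S = inversionSet RS.pos w := by
  constructor
  · intro hS
    obtain ⟨hSpos, hclosed⟩ := RootSystemData.isBiconvex_iff_isSumClosed_flipPos.mp hS
    obtain ⟨w, hw, hSw⟩ :=
      (RootSystemData.isPositiveSystem_flipPos hSpos hclosed).exists_eq_image_pos
    refine ⟨w, hw, RootSystemData.eq_of_flipPos_eq hSpos (fun _ h => h.1) ?_⟩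
    rw [hSw, RootSystemData.flipPos_inversionSet hw]
  · rintro ⟨w, hw, rfl⟩
    refine RootSystemData.isBiconvex_iff_isSumClosed_flipPos.mpr ⟨fun _ h => h.1, ?_⟩
    rw [RootSystemData.flipPos_inversionSet hw]
    exact (RS.isPositiveSystem_pos.image hw).isSumClosed
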